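/- arXiv:0911.0342 — 3 statements merged into one kernel-verified Lean document; each statement's English description precedes it below -/
import Mathlib

section
/- If λ is a broken partition (i.e., there exist indices 1 < c < d with λ_{c-1} - λ_c > 1 and λ_{d-1} = λ_d > 0), then the conjugate partition λ' is also broken. -/
/-!
Transposing the Young diagram swaps the two defining features of brokenness. A drop of at least
two between rows `c - 1` and `c` means that columns `μ_c + 1` and `μ_c + 2` both have length
`c - 1`, which is a repeated part of `μ'`; a repeated row `μ_{d-1} = μ_d` means that column `μ_d`
has length at least `d` while column `μ_d + 1` has length at most `d - 2`, which is a drop of at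
least two in `μ'`. Hence `c' = μ_d + 1` and `d' = μ_c + 2` witness that `μ'` is broken.
-/

/-- A partition: weakly decreasing sequence of non-negative integers (indexed from 1,
with the convention `μ 0 = 0`), with finitely many nonzero terms. -/
def IsPartition (μ : ℕ → ℕ) : Prop :=
  μ 0 = 0 ∧ (∀ i, 1 ≤ i → μ (i + 1) ≤ μ i) ∧ ∃ N, ∀ i, N ≤ i → μ i = 0

/-- The conjugate partition: `conj μ j = |{i ≥ 1 : μ i ≥ j}|`. -/
noncomputable def conj (μ : ℕ → ℕ) (j : ℕ) : ℕ :=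
  Nat.card {i : ℕ // 1 ≤ i ∧ j ≤ μ i}

/-- `(i,j)` is a node of the Young diagram of `μ`. -/
def IsNode (μ : ℕ → ℕ) (i j : ℕ) : Prop := 1 ≤ i ∧ 1 ≤ j ∧ j ≤ μ i

/-- The hook length `h_μ(i,j) = 1 + μ_i - j + μ'_j - i` (as an integer). -/
noncomputable def hook (μ : ℕ → ℕ) (i j : ℕ) : ℤ :=
  1 + (μ i : ℤ) - (j : ℤ) + (conj μ j : ℤ) - (i : ℤ)

/-- `μ` is broken: there exist `1 < c < d` with `μ_{c-1} - μ_c > 1` and `μ_{d-1} = μ_d > 0`. -/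
def Broken (μ : ℕ → ℕ) : Prop :=
  ∃ c d : ℕ, 1 < c ∧ c < d ∧ μ c + 1 < μ (c - 1) ∧ μ (d - 1) = μ d ∧ 0 < μ d

/-- `μ` is 2-singular: some `μ_i = μ_{i+1} > 0` (with `i ≥ 1`). -/
def TwoSingular (μ : ℕ → ℕ) : Prop := ∃ i : ℕ, 1 ≤ i ∧ μ i = μ (i + 1) ∧ 0 < μ i

/-- `μ` is an `e`-core: no hook length is divisible by `e`. -/
def IsECore (e : ℕ) (μ : ℕ → ℕ) : Prop :=
  ∀ i j : ℕ, IsNode μ i j → ¬ (e : ℤ) ∣ hook μ i j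

/-- `μ` is an `e`-JM partition. -/
def IsJM (e : ℕ) (μ : ℕ → ℕ) : Prop :=
  ∀ i j : ℕ, IsNode μ i j → (e : ℤ) ∣ hook μ i j →
    (∀ k, 1 ≤ k → k ≤ μ i → (e : ℤ) ∣ hook μ i k) ∨
    (∀ k, 1 ≤ k → k ≤ conj μ j → (e : ℤ) ∣ hook μ k j)

lemma IsPartition.antitoneOn {μ : ℕ → ℕ} (hμ : IsPartition μ) : AntitoneOn μ {i | 1 ≤ i} :=
  antitoneOn_nat_Ici_of_succ_le hμ.2.1

lemma conj_eq_ncard (μ : ℕ → ℕ) (j : ℕ) : conj μ j = {i | 1 ≤ i ∧ j ≤ μ i}.ncard := by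
  rw [conj, ← Nat.card_coe_set_eq]
  rfl

section Conj

variable {μ : ℕ → ℕ} {i j : ℕ}

lemma conj_lt_of_lt (hμ : IsPartition μ) (hi : 1 ≤ i) (hij : μ i < j) : conj μ j < i := by
  have hsub : {x | 1 ≤ x ∧ j ≤ μ x} ⊆ Set.Ico 1 i := fun x ⟨hx, hjx⟩ =>
    ⟨hx, lt_of_not_ge fun hix => by have := hμ.antitoneOn hi hx hix; omega⟩
  calc conj μ j ≤ (Set.Ico 1 i).ncard := by
        rw [conj_eq_ncard]; exact Set.ncard_le_ncard hsub (Set.finite_Ico 1 i)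
    _ < i := by rw [Set.ncard_Ico_nat]; omega

lemma le_conj_of_le (hμ : IsPartition μ) (hi : 1 ≤ i) (hj : 1 ≤ j) (hij : j ≤ μ i) :
    i ≤ conj μ j := by
  obtain ⟨N, hN⟩ := hμ.2.2
  have hfin : {x | 1 ≤ x ∧ j ≤ μ x}.Finite := (Set.finite_Iio N).subset fun x ⟨_, hjx⟩ =>
    lt_of_not_ge fun hNx => by have := hN x hNx; omega
  have hsub : Set.Icc 1 i ⊆ {x | 1 ≤ x ∧ j ≤ μ x} := fun x ⟨hx, hxi⟩ =>
    ⟨hx, hij.trans (hμ.antitoneOn hx hi hxi)⟩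
  calc i = (Set.Icc 1 i).ncard := by rw [Set.ncard_Icc_nat]; omega
    _ ≤ conj μ j := by rw [conj_eq_ncard]; exact Set.ncard_le_ncard hsub hfin

end Conj

/-- If `μ` is a broken partition, then its conjugate `μ'` is also broken. -/
theorem broken_conj (μ : ℕ → ℕ) (hμ : IsPartition μ) (h : Broken μ) :
    Broken (conj μ) := by
  obtain ⟨c, d, hc, hcd, hgap, hrep, hpos⟩ := h
  have hdc : μ d ≤ μ c := hμ.antitoneOn (show 1 ≤ c by omega) (show 1 ≤ d by omega) hcd.le
  have hcol : ∀ j, μ c < j → j ≤ μ (c - 1) → conj μ j = c - 1 := fun j hcj hjc =>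
    le_antisymm (Nat.le_sub_one_of_lt (conj_lt_of_lt hμ (by omega) hcj))
      (le_conj_of_le hμ (by omega) (by omega) hjc)
  have hd : d ≤ conj μ (μ d) := le_conj_of_le hμ (by omega) hpos le_rfl
  have hd' : conj μ (μ d + 1) < d - 1 := conj_lt_of_lt hμ (by omega) (by omega)
  refine ⟨μ d + 1, μ c + 2, by omega, by omega, ?_, ?_, ?_⟩
  · rw [Nat.add_sub_cancel]
    omega
  · rw [show μ c + 2 - 1 = μ c + 1 from rfl, hcol _ (by omega) (by omega), hcol _ (by omega) hgap]
  · rw [hcol _ (by omega) hgap]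
    omega
end

section
/- Suppose λ is an unbroken doubly-singular partition (both λ and λ' are 2-singular) that is a (2p)-JM partition for a prime p. Then λ is a 2p-core, i.e., no hook length of λ is divisible by 2p. -/
/-- `r` and `c` are the row lengths and the column lengths of the same Young diagram. -/
def IsConjugatePair (r c : ℕ → ℕ) : Prop :=
  ∀ i j, 1 ≤ i → 1 ≤ j → (j ≤ r i ↔ i ≤ c j)

namespace IsConjugatePair

variable {r c : ℕ → ℕ}

theorem symm (h : IsConjugatePair r c) : IsConjugatePair c r :=
  fun i j hi hj => (h j i hj hi).symm

theorem antitone (h : IsConjugatePair r c) {a b : ℕ} (ha : 1 ≤ a) (hab : a ≤ b) :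
    r b ≤ r a := by
  rcases Nat.eq_zero_or_pos (r b) with hb | hb
  · omega
  · have hb' : b ≤ c (r b) := (h b (r b) (by omega) hb).1 le_rfl
    exact (h a (r b) ha hb).2 (hab.trans hb')

theorem top_gap_of_dvd_hooks_column (h : IsConjugatePair r c) {e j : ℕ}
    (hj : 1 ≤ j) (hjr : j ≤ r 1)
    (hdvd : ∀ k, 1 ≤ k → k ≤ c j → (e : ℤ) ∣ 1 + (r k : ℤ) - j + (c j : ℤ) - k) :
    r 2 + e ≤ r 1 + 1 := by
  have hcj : 1 ≤ c j := (h 1 j le_rfl hj).1 hjr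
  rcases (show 2 ≤ c j ∨ c j = 1 by omega) with hc2 | hc1
  · have hr : r 2 ≤ r 1 := h.antitone le_rfl (by norm_num)
    have := Int.le_of_dvd (by omega) (dvd_sub (hdvd 1 le_rfl hcj) (hdvd 2 (by norm_num) hc2))
    omega
  · have hr2 : r 2 < j := by
      by_contra! hjr2
      have := (h 2 j (by norm_num) hj).1 hjr2
      omega
    have := Int.le_of_dvd (by omega) (hdvd 1 le_rfl hcj)
    omega

theorem succ_gap_of_eq (h : IsConjugatePair r c) {b : ℕ} (hb : 1 ≤ b)
    (heq : c b = c (b + 1)) (hpos : 0 < c b) :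
    r (c b + 1) + 1 < r (c b) := by
  have hle : b + 1 ≤ r (c b) := (h (c b) (b + 1) hpos (by omega)).2 heq.le
  have hlt : r (c b + 1) < b := by
    by_contra! hge
    have := (h (c b + 1) b (by omega) hb).1 hge
    omega
  omega

theorem eq_one_of_two_add_le (h : IsConjugatePair r c) (hc : c 2 + 2 ≤ c 1) :
    r (c 1 - 1) = 1 ∧ r (c 1) = 1 := by
  have hge : ∀ i, 1 ≤ i → i ≤ c 1 → 1 ≤ r i := fun i hi hic => (h i 1 hi le_rfl).2 hic
  have hlt : ∀ i, 1 ≤ i → c 2 < i → r i < 2 := fun i hi hci => by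
    by_contra! h2
    have := (h i 2 hi (by norm_num)).1 h2
    omega
  have := hge (c 1 - 1) (by omega) (by omega)
  have := hge (c 1) (by omega) le_rfl
  have := hlt (c 1 - 1) (by omega) (by omega)
  have := hlt (c 1) (by omega) (by omega)
  omega

end IsConjugatePair

namespace IsPartition

variable {μ : ℕ → ℕ}

theorem antitone (hμ : IsPartition μ) {a b : ℕ} (ha : 1 ≤ a) (hab : a ≤ b) : μ b ≤ μ a := by
  induction b, hab using Nat.le_induction with
  | base => exact le_rfl
  | succ b hab ih => exact (hμ.2.1 b (ha.trans hab)).trans ih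

theorem isConjugatePair_conj (hμ : IsPartition μ) : IsConjugatePair μ (conj μ) := by
  intro i j hi hj
  obtain ⟨N, hN⟩ := hμ.2.2
  set S : Set ℕ := {x | 1 ≤ x ∧ j ≤ μ x}
  have hS : S ⊆ Set.Icc 1 N := fun x ⟨hx1, hx2⟩ => ⟨hx1, by
    by_contra! hx
    have := hN x hx.le
    omega⟩
  have hcard : conj μ j = S.ncard := Nat.card_coe_set_eq S
  have hIcc : ∀ n, (Set.Icc 1 n).ncard = n := fun n => by
    rw [← Finset.coe_Icc, Set.ncard_coe_finset, Nat.card_Icc, Nat.add_sub_cancel]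
  constructor
  · intro hji
    have hsub : Set.Icc 1 i ⊆ S := fun x ⟨hx1, hxi⟩ => ⟨hx1, hji.trans (hμ.antitone hx1 hxi)⟩
    have := Set.ncard_le_ncard hsub ((Set.finite_Icc 1 N).subset hS)
    rwa [hIcc, ← hcard] at this
  · intro hic
    by_contra! hlt
    have hsub : S ⊆ Set.Icc 1 (i - 1) := fun x ⟨hx1, hx2⟩ => ⟨hx1, by
      by_contra! hx
      have := hμ.antitone hi (show i ≤ x by omega)
      omega⟩
    have := Set.ncard_le_ncard hsub (Set.finite_Icc _ _)
    rw [hIcc, ← hcard] at this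
    omega

theorem conj_top_gap_of_dvd_hooks_row (hμ : IsPartition μ) {e i : ℕ}
    (hi : 1 ≤ i) (hμi : 1 ≤ μ i)
    (hrow : ∀ k, 1 ≤ k → k ≤ μ i → (e : ℤ) ∣ hook μ i k) :
    conj μ 2 + e ≤ conj μ 1 + 1 := by
  refine hμ.isConjugatePair_conj.symm.top_gap_of_dvd_hooks_column hi
    ((hμ.isConjugatePair_conj i 1 hi le_rfl).1 hμi) fun k hk hki => ?_
  have hhook : hook μ i k = 1 + (conj μ k : ℤ) - i + (μ i : ℤ) - k := by
    unfold hook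
    ring
  exact hhook ▸ hrow k hk hki

theorem broken_of_twoSingular_conj (hμ : IsPartition μ) (h : TwoSingular (conj μ))
    (hgap : conj μ 2 + 2 ≤ conj μ 1) : Broken μ := by
  obtain ⟨b, hb, heq, hpos⟩ := h
  have hμc := hμ.isConjugatePair_conj
  have hgapb := hμc.succ_gap_of_eq hb heq hpos
  have hcb : conj μ (b + 1) ≤ conj μ 2 := hμc.symm.antitone (by norm_num) (by omega)
  obtain ⟨hpen, hlast⟩ := hμc.eq_one_of_two_add_le hgap
  exact ⟨conj μ b + 1, conj μ 1, by omega, by omega, by simpa using hgapb, by omega, by omega⟩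

end IsPartition

theorem broken_of_twoSingular_of_top_gap {μ : ℕ → ℕ} (h : TwoSingular μ) (hgap : μ 2 + 2 ≤ μ 1) :
    Broken μ := by
  obtain ⟨a, ha, heq, hpos⟩ := h
  have ha2 : 2 ≤ a := by
    by_contra! ha2
    obtain rfl : a = 1 := by omega
    simp only [Nat.reduceAdd] at heq
    omega
  exact ⟨2, a + 1, by norm_num, by omega, hgap, by simpa using heq, by omega⟩

/-- An unbroken doubly-singular `(2p)`-JM partition is a `2p`-core. -/
theorem core_of_unbroken_doublySingular_JM (μ : ℕ → ℕ) (p : ℕ)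
    (hμ : IsPartition μ) (hp : p.Prime)
    (h1 : TwoSingular μ) (h2 : TwoSingular (conj μ))
    (hub : ¬ Broken μ) (hjm : IsJM (2 * p) μ) :
    IsECore (2 * p) μ := by
  intro i j hnode hdvd
  have he : 4 ≤ 2 * p := by linarith [hp.two_le]
  rcases hjm i j hnode hdvd with hrow | hcol <;> obtain ⟨hi, hj, hji⟩ := hnode
  · have := hμ.conj_top_gap_of_dvd_hooks_row hi (by omega) hrow
    exact hub (hμ.broken_of_twoSingular_conj h2 (by omega))
  · have hjμ : j ≤ μ 1 := hji.trans (hμ.antitone le_rfl hi)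
    have := hμ.isConjugatePair_conj.top_gap_of_dvd_hooks_column hj hjμ hcol
    exact hub (broken_of_twoSingular_of_top_gap h1 (by omega))
end

section
/- Let λ be a 2-singular partition and let a be maximal such that λ_{a-1} = λ_a > 0. Then for every k with 1 ≤ k ≤ λ_a, the set {h_λ(a-1,j) : k ≤ j ≤ λ_a} ∪ {h_λ(a,j) : k ≤ j ≤ λ_a} equals the interval {1, 2, ..., l} for some l ≥ λ_a - k + 2. -/
lemma add_sub_le_of_forall_succ_lt (f : ℕ → ℤ) {k n : ℕ} (hkn : k ≤ n)
    (hstep : ∀ j, k ≤ j → j < n → f (j + 1) < f j) :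
    f n + (n - k : ℕ) ≤ f k := by
  induction hkn using Nat.decreasingInduction with
  | self => simp
  | of_succ k hk ih =>
    have := ih fun j hj hjn => hstep j (by omega) hjn
    have := hstep k le_rfl hk
    omega

lemma setOf_eq_Icc_of_steps (f : ℕ → ℤ) {k n : ℕ} (hkn : k ≤ n) (hn : f n = 1)
    (hstep : ∀ j, k ≤ j → j < n → f (j + 1) < f j ∧ f j ≤ f (j + 1) + 2) :
    {h : ℤ | ∃ j, k ≤ j ∧ j ≤ n ∧ (h = f j + 1 ∨ h = f j)} = Set.Icc 1 (f k + 1) := by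
  induction hkn using Nat.decreasingInduction with
  | self =>
    ext h
    constructor
    · rintro ⟨j, hnj, hjn, hj⟩
      obtain rfl : j = n := le_antisymm hjn hnj
      simp only [Set.mem_Icc]
      omega
    · rintro ⟨h1, h2⟩
      exact ⟨n, le_rfl, le_rfl, by omega⟩
  | of_succ k hk ih =>
    have ih := Set.ext_iff.mp (ih fun j hj hjn => hstep j (by omega) hjn)
    have hfk := hstep k le_rfl hk
    ext h
    simp only [Set.mem_ofPred_eq, Set.mem_Icc] at ih ⊢
    have hpos := (ih (f (k + 1))).mp ⟨k + 1, le_rfl, hk, Or.inr rfl⟩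
    constructor
    · rintro ⟨j, hkj, hjn, hj⟩
      rcases hkj.eq_or_lt with rfl | hlt
      · omega
      · have := (ih h).mp ⟨j, hlt, hjn, hj⟩
        omega
    · rintro ⟨h1, h2⟩
      by_cases hh : h ≤ f (k + 1) + 1
      · obtain ⟨j, hkj, hjn, hj⟩ := (ih h).mpr ⟨h1, hh⟩
        exact ⟨j, by omega, hjn, hj⟩
      · exact ⟨k, le_rfl, by omega, by omega⟩

namespace IsPartition

variable {μ : ℕ → ℕ}

lemma antitoneOn_s6 (hμ : IsPartition μ) : AntitoneOn μ {i | 1 ≤ i} :=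
  antitoneOn_nat_Ici_of_succ_le hμ.2.1

lemma exists_forall_le_iff (hμ : IsPartition μ) {j : ℕ} (hj : 1 ≤ j) :
    ∃ m, ∀ i, 1 ≤ i → (j ≤ μ i ↔ i ≤ m) := by
  classical
  obtain ⟨N, hN⟩ := hμ.2.2
  refine ⟨Nat.findGreatest (fun i => j ≤ μ i) N, fun i hi => ⟨fun hji => ?_, fun him => ?_⟩⟩
  · have hiN : i ≤ N := by
      by_contra! hNi
      have := hN i hNi.le
      omega
    exact Nat.le_findGreatest hiN hji
  · set m := Nat.findGreatest (fun i => j ≤ μ i) N with hm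
    have hjm : j ≤ μ m := Nat.findGreatest_of_ne_zero (P := fun i => j ≤ μ i) hm.symm (by omega)
    exact hjm.trans (hμ.antitoneOn_s6 hi (show 1 ≤ m by omega) him)

lemma le_conj_iff (hμ : IsPartition μ) {i j : ℕ} (hi : 1 ≤ i) (hj : 1 ≤ j) :
    i ≤ conj μ j ↔ j ≤ μ i := by
  obtain ⟨m, hm⟩ := hμ.exists_forall_le_iff hj
  have hconj : conj μ j = m := by
    calc conj μ j = Nat.card (Finset.Icc 1 m) :=
          Nat.card_congr <| Equiv.subtypeEquivRight fun i => by
            rw [Finset.mem_Icc]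
            constructor
            · exact fun ⟨hi, hji⟩ => ⟨hi, (hm i hi).mp hji⟩
            · exact fun ⟨hi, him⟩ => ⟨hi, (hm i hi).mpr him⟩
      _ = m := by rw [Nat.card_eq_fintype_card, Fintype.card_coe, Nat.card_Icc, Nat.add_sub_cancel]
  rw [hconj, hm i hi]

lemma conj_succ_le (hμ : IsPartition μ) {j : ℕ} (hj : 1 ≤ j) : conj μ (j + 1) ≤ conj μ j := by
  rcases Nat.eq_zero_or_pos (conj μ (j + 1)) with h | h
  · omega
  · have := (hμ.le_conj_iff h (by omega)).mp le_rfl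
    exact (hμ.le_conj_iff h hj).mpr (by omega)

lemma conj_apply_self (hμ : IsPartition μ) {i : ℕ} (hi : 1 ≤ i) (hpos : 0 < μ i)
    (hlt : μ (i + 1) < μ i) : conj μ (μ i) = i := by
  apply le_antisymm
  · by_contra! h
    have := (hμ.le_conj_iff (i := i + 1) (by omega) hpos).mp h
    omega
  · exact (hμ.le_conj_iff hi hpos).mpr le_rfl

-- `conj μ j - conj μ (j + 1)` counts the rows of length `j`, and no two rows below row `a`
-- are equal.
lemma conj_le_conj_succ_add_one (hμ : IsPartition μ) {a j : ℕ} (ha : 1 ≤ a)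
    (hmax : ∀ i, a < i → ¬ (μ (i - 1) = μ i ∧ 0 < μ i)) (hj : 1 ≤ j) (hja : j + 1 ≤ μ a) :
    conj μ j ≤ conj μ (j + 1) + 1 := by
  by_contra! h
  set m := conj μ j
  have ha_le : a ≤ conj μ (j + 1) := (hμ.le_conj_iff ha (by omega)).mpr hja
  have hjm : j ≤ μ m := (hμ.le_conj_iff (by omega) hj).mp le_rfl
  have hm_pred : μ (m - 1) < j + 1 := by
    by_contra! h'
    have := (hμ.le_conj_iff (i := m - 1) (by omega) (by omega)).mpr h'
    omega
  have hmono : μ m ≤ μ (m - 1) :=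
    hμ.antitoneOn_s6 (show 1 ≤ m - 1 by omega) (show 1 ≤ m by omega) (by omega)
  exact hmax m (by omega) ⟨by omega, by omega⟩

end IsPartition

lemma hook_eq_hook_succ (μ : ℕ → ℕ) (i j : ℕ) :
    hook μ i j = hook μ i (j + 1) + 1 + conj μ j - conj μ (j + 1) := by
  unfold hook
  push_cast
  ring

lemma hook_pred_eq_hook_add_one {μ : ℕ → ℕ} {a : ℕ} (ha : 1 ≤ a) (hrep : μ (a - 1) = μ a)
    (j : ℕ) : hook μ (a - 1) j = hook μ a j + 1 := by
  unfold hook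
  rw [hrep, Nat.cast_sub ha]
  ring

lemma IsPartition.hook_apply_self {μ : ℕ → ℕ} (hμ : IsPartition μ) {i : ℕ} (hi : 1 ≤ i)
    (hpos : 0 < μ i) (hlt : μ (i + 1) < μ i) : hook μ i (μ i) = 1 := by
  unfold hook
  rw [hμ.conj_apply_self hi hpos hlt]
  ring

/-- If `a` is maximal with `μ_{a-1} = μ_a > 0`, then for `1 ≤ k ≤ μ_a`, the set of hook
lengths `{h_μ(a-1,j), h_μ(a,j) : k ≤ j ≤ μ_a}` is an interval `{1,…,l}` with
`l ≥ μ_a - k + 2`. -/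
theorem hooks_form_interval (μ : ℕ → ℕ) (a : ℕ) (hμ : IsPartition μ)
    (ha2 : 2 ≤ a) (hrep : μ (a - 1) = μ a ∧ 0 < μ a)
    (hmax : ∀ i, a < i → ¬ (μ (i - 1) = μ i ∧ 0 < μ i))
    (k : ℕ) (hk1 : 1 ≤ k) (hk2 : k ≤ μ a) :
    ∃ l : ℕ, μ a - k + 2 ≤ l ∧
      {h : ℤ | ∃ j : ℕ, k ≤ j ∧ j ≤ μ a ∧ (h = hook μ (a - 1) j ∨ h = hook μ a j)}
        = {h : ℤ | 1 ≤ h ∧ h ≤ (l : ℤ)} := by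
  obtain ⟨hrep, hpos⟩ := hrep
  have hlt : μ (a + 1) < μ a := by
    have hle := hμ.2.1 a (by omega)
    have hne := hmax (a + 1) (by omega)
    rw [Nat.add_sub_cancel] at hne
    omega
  have hsteps : ∀ j, k ≤ j → j < μ a →
      hook μ a (j + 1) < hook μ a j ∧ hook μ a j ≤ hook μ a (j + 1) + 2 := by
    intro j hkj hja
    have hdown := hμ.conj_succ_le (j := j) (by omega)
    have hdrop := hμ.conj_le_conj_succ_add_one (by omega) hmax (by omega) hja
    rw [hook_eq_hook_succ μ a j]
    omega
  have hlast := hμ.hook_apply_self (by omega) hpos hlt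
  have hbound := add_sub_le_of_forall_succ_lt _ hk2 fun j hkj hja => (hsteps j hkj hja).1
  simp only [hook_pred_eq_hook_add_one (by omega : 1 ≤ a) hrep]
  refine ⟨(hook μ a k + 1).toNat, by omega, ?_⟩
  rw [Int.toNat_of_nonneg (by omega)]
  exact setOf_eq_Icc_of_steps _ hk2 hlast hsteps
end
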